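/- arXiv:1802.00809 — 7 statements merged into one kernel-verified Lean document; each statement's English description precedes it below -/
import Mathlib

section
/- Let M = (m_1, ..., m_k) be a finite nonincreasing sequence of positive integers with m_k the last entry greater than 1 (or M = (1) representing ℕ), satisfying: for each n there exists s(n) ≥ n+1 with m_n = m_{n+1} + ... + m_{s(n)} (entries beyond k taken to be 1). Then the set S = {0, m_1, m_1+m_2, ..., m_1+⋯+m_k} ∪ {n : n ≥ m_1+⋯+m_k} is an Arf numerical semigroup. -/
def IsNumericalSemigroup (S : Set ℕ) : Prop :=
  0 ∈ S ∧ (∀ a ∈ S, ∀ b ∈ S, a + b ∈ S) ∧ Sᶜ.Finite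

def IsArf (S : Set ℕ) : Prop :=
  ∀ s ∈ S, ∀ a ∈ S, ∀ b ∈ S, s ≤ a → s ≤ b → a + b - s ∈ S

/-- A multiplicity sequence, written `0`-indexed: `m 0 = m₁`, `m 1 = m₂`, ….
`k` is such that all entries from position `k` on are `1`; each entry is a sum
of consecutive subsequent entries. -/
def IsMultiplicitySequence (m : ℕ → ℕ) (k : ℕ) : Prop :=
  (∀ i, 1 ≤ m i) ∧ (∀ i, m (i + 1) ≤ m i) ∧ (∀ i, k ≤ i → m i = 1) ∧
  (∀ i, ∃ s, i < s ∧ m i = ∑ l ∈ Finset.Ioc i s, m l)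

/-- The Arf numerical semigroup associated to a multiplicity sequence:
the partial sums `m₁ + ⋯ + m_j` for `j ≤ k` together with everything at least
`m₁ + ⋯ + m_k`. -/
def AS (m : ℕ → ℕ) (k : ℕ) : Set ℕ :=
  {x | ∃ j ≤ k, x = ∑ i ∈ Finset.range j, m i} ∪
    {x | (∑ i ∈ Finset.range k, m i) ≤ x}

namespace Stmt6Aux

/-- Partial sums. -/
def PS (m : ℕ → ℕ) (j : ℕ) : ℕ := ∑ i ∈ Finset.range j, m i

variable {m : ℕ → ℕ}

lemma PS_succ (j : ℕ) : PS m (j + 1) = PS m j + m j := Finset.sum_range_succ m j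

lemma PS_strictMono (h1 : ∀ i, 1 ≤ m i) : StrictMono (PS m) :=
  strictMono_nat_of_lt_succ fun n => by have := h1 n; rw [PS_succ]; omega

lemma m_antitone (h2 : ∀ i, m (i + 1) ≤ m i) : ∀ i j, i ≤ j → m j ≤ m i :=
  fun _ _ h => antitone_nat_of_succ_le h2 h

lemma Ioc_eq_Ico (a b : ℕ) : Finset.Ioc a b = Finset.Ico (a + 1) (b + 1) := by
  ext x; simp only [Finset.mem_Ioc, Finset.mem_Ico]; omega

lemma PS_add_Ico {a b : ℕ} (h : a ≤ b) :
    PS m a + ∑ l ∈ Finset.Ico a b, m l = PS m b := by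
  unfold PS
  rw [Finset.range_eq_Ico, Finset.range_eq_Ico]
  exact Finset.sum_Ico_consecutive m (Nat.zero_le a) h

lemma key (h1 : ∀ i, 1 ≤ m i) (h2 : ∀ i, m (i + 1) ≤ m i)
    (h4 : ∀ i, ∃ s, i < s ∧ m i = ∑ l ∈ Finset.Ioc i s, m l) :
    ∀ n t, n < t → ∃ u, t < u ∧ PS m t + m n = PS m u := by
  suffices H : ∀ M n t, m n ≤ M → n < t → ∃ u, t < u ∧ PS m t + m n = PS m u by
    exact fun n t h => H (m n) n t le_rfl h
  intro M
  induction M using Nat.strong_induction_on with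
  | _ M ihM =>
  suffices Hd : ∀ d n t, m n ≤ M → n < t → t ≤ n + d →
      ∃ u, t < u ∧ PS m t + m n = PS m u by
    exact fun n t h h' => Hd t n t h h' (by omega)
  intro d
  induction d with
  | zero => intro n t _ h h'; omega
  | succ d ihd =>
    intro n t hM' hnt htd
    obtain ⟨s, hns, hsum⟩ := h4 n
    have hkey1 : PS m (n + 1) + m n = PS m (s + 1) := by
      rw [hsum, Ioc_eq_Ico]
      exact PS_add_Ico (by omega)
    rcases eq_or_lt_of_le (Nat.succ_le_of_lt hnt) with ht | ht
    · refine ⟨s + 1, by omega, ?_⟩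
      rw [← ht]
      exact hkey1
    · rcases eq_or_lt_of_le (Nat.succ_le_of_lt hns) with hs | hs
      · -- s = n + 1, so m n = m (n+1)
        have hmn1 : m n = m (n + 1) := by
          rw [hsum, ← hs]
          simp
        obtain ⟨u, hu, hequ⟩ := ihd (n + 1) t (by rw [← hmn1]; exact hM') ht (by omega)
        exact ⟨u, hu, by rw [hmn1]; exact hequ⟩
      · -- n + 1 < s
        have hsplit : m n = m (n + 1) + ∑ l ∈ Finset.Ico (n + 2) (s + 1), m l := by
          rw [hsum, Ioc_eq_Ico, Finset.sum_eq_sum_Ico_succ_bot (by omega)]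
        have hmem : n + 2 ∈ Finset.Ico (n + 2) (s + 1) := by
          simp only [Finset.mem_Ico]; omega
        have hpos : 1 ≤ ∑ l ∈ Finset.Ico (n + 2) (s + 1), m l :=
          le_trans (h1 (n + 2)) (Finset.single_le_sum (fun i _ => Nat.zero_le (m i)) hmem)
        have hlt : m (n + 1) < m n := by omega
        have key' : ∀ n' t', m n' ≤ m (n + 1) → n' < t' →
            ∃ u, t' < u ∧ PS m t' + m n' = PS m u := ihM (m (n + 1)) (by omega)
        have C : ∀ c a u, n + 1 ≤ a → a < u →
            ∃ v, u + c ≤ v ∧ PS m u + ∑ l ∈ Finset.Ico a (a + c), m l = PS m v := by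
          intro c
          induction c with
          | zero => intro a u _ _; exact ⟨u, le_rfl, by simp⟩
          | succ c ihc =>
            intro a u ha hau
            obtain ⟨v, hv, heqv⟩ := ihc a u ha hau
            obtain ⟨v', hv', heqv'⟩ :=
              key' (a + c) v (m_antitone h2 _ _ (by omega)) (by omega)
            refine ⟨v', by omega, ?_⟩
            rw [show a + (c + 1) = (a + c) + 1 from rfl,
              Finset.sum_Ico_succ_top (by omega), ← add_assoc, heqv, heqv']
        obtain ⟨u₁, hu₁, heq₁⟩ := key' (n + 1) t le_rfl ht
        obtain ⟨v, hv, heqv⟩ := C (s - n - 1) (n + 2) u₁ (by omega) (by omega)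
        rw [show n + 2 + (s - n - 1) = s + 1 from by omega] at heqv
        refine ⟨v, by omega, ?_⟩
        rw [hsplit, ← add_assoc, heq₁, heqv]

lemma addLemma (h1 : ∀ i, 1 ≤ m i) (h2 : ∀ i, m (i + 1) ≤ m i)
    (h4 : ∀ i, ∃ s, i < s ∧ m i = ∑ l ∈ Finset.Ioc i s, m l) :
    ∀ d n j, n + d ≤ j → ∃ u, j ≤ u ∧ PS m n + PS m u = PS m (n + d) + PS m j := by
  intro d
  induction d with
  | zero => intro n j h; exact ⟨j, le_rfl, by simp⟩
  | succ d ihd =>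
    intro n j h
    obtain ⟨u, hu, hequ⟩ := ihd (n + 1) j (by omega)
    obtain ⟨v, hv, heqv⟩ := key h1 h2 h4 n u (by omega)
    refine ⟨v, by omega, ?_⟩
    have hps : PS m (n + 1) = PS m n + m n := PS_succ n
    rw [show n + 1 + d = n + (d + 1) from by omega] at hequ
    omega

lemma PS_k_add {k : ℕ} (h3 : ∀ i, k ≤ i → m i = 1) (r : ℕ) :
    PS m (k + r) = PS m k + r := by
  induction r with
  | zero => simp
  | succ r ih =>
    rw [show k + (r + 1) = (k + r) + 1 from rfl, PS_succ, ih, h3 (k + r) (by omega)]; omega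

lemma mem_AS_iff {k : ℕ} (h1 : ∀ i, 1 ≤ m i) (h3 : ∀ i, k ≤ i → m i = 1) (x : ℕ) :
    x ∈ AS m k ↔ ∃ j, x = PS m j := by
  constructor
  · rintro (⟨j, _, rfl⟩ | hx)
    · exact ⟨j, rfl⟩
    · refine ⟨k + (x - PS m k), ?_⟩
      rw [PS_k_add h3]
      have : PS m k ≤ x := hx
      omega
  · rintro ⟨j, rfl⟩
    by_cases hj : j ≤ k
    · exact Or.inl ⟨j, hj, rfl⟩
    · exact Or.inr ((PS_strictMono h1).monotone (by omega))

end Stmt6Aux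

/-- If `M = (m₁, …, m_k)` is a multiplicity sequence with `m_k` its last entry
greater than `1` (or `M = (1)`, the case `k = 0`, representing `ℕ`), then
`S = {0, m₁, m₁+m₂, …, m₁+⋯+m_k} ∪ {n : n ≥ m₁+⋯+m_k}` is an Arf numerical
semigroup. -/
theorem stmt6 (m : ℕ → ℕ) (k : ℕ) (hM : IsMultiplicitySequence m k)
    (hk : k = 0 ∨ 2 ≤ m (k - 1)) :
    IsNumericalSemigroup (AS m k) ∧ IsArf (AS m k) := by
  open Stmt6Aux in
  obtain ⟨h1, h2, h3, h4⟩ := hM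
  have hmem := Stmt6Aux.mem_AS_iff (m := m) (k := k) h1 h3
  have mono := Stmt6Aux.PS_strictMono (m := m) h1
  have G := Stmt6Aux.addLemma (m := m) h1 h2 h4
  -- general Arf-type closure
  have main : ∀ n i j, n ≤ i → i ≤ j →
      ∃ u, Stmt6Aux.PS m i + Stmt6Aux.PS m j - Stmt6Aux.PS m n = Stmt6Aux.PS m u := by
    intro n i j hni hij
    obtain ⟨u, hu, hequ⟩ := G (i - n) n j (by omega)
    rw [show n + (i - n) = i from by omega] at hequ
    have : Stmt6Aux.PS m n ≤ Stmt6Aux.PS m i := mono.monotone hni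
    exact ⟨u, by omega⟩
  refine ⟨⟨?_, ?_, ?_⟩, ?_⟩
  · exact (hmem 0).2 ⟨0, by simp [Stmt6Aux.PS]⟩
  · intro a ha b hb
    obtain ⟨i, rfl⟩ := (hmem a).1 ha
    obtain ⟨j, rfl⟩ := (hmem b).1 hb
    have h0 : Stmt6Aux.PS m 0 = 0 := by simp [Stmt6Aux.PS]
    rcases le_total i j with h | h
    · obtain ⟨u, hequ⟩ := main 0 i j (Nat.zero_le i) h
      exact (hmem _).2 ⟨u, by omega⟩
    · obtain ⟨u, hequ⟩ := main 0 j i (Nat.zero_le j) h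
      exact (hmem _).2 ⟨u, by omega⟩
  · apply Set.Finite.subset (Set.finite_Iio (Stmt6Aux.PS m k))
    intro x hx
    simp only [Set.mem_compl_iff, AS, Set.mem_union, Set.mem_setOf_eq] at hx
    have : ¬ (Stmt6Aux.PS m k ≤ x) := fun h => hx (Or.inr h)
    exact lt_of_not_ge this
  · intro s hs a ha b hb hsa hsb
    obtain ⟨n, rfl⟩ := (hmem s).1 hs
    obtain ⟨i, rfl⟩ := (hmem a).1 ha
    obtain ⟨j, rfl⟩ := (hmem b).1 hb
    have hni : n ≤ i := by
      by_contra h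
      exact absurd hsa (not_le.2 (mono (by omega)))
    have hnj : n ≤ j := by
      by_contra h
      exact absurd hsb (not_le.2 (mono (by omega)))
    rcases le_total i j with h | h
    · obtain ⟨u, hequ⟩ := main n i j hni h
      exact (hmem _).2 ⟨u, by omega⟩
    · obtain ⟨u, hequ⟩ := main n j i hnj h
      exact (hmem _).2 ⟨u, by omega⟩
end

section
/- Every Arf numerical semigroup S ≠ ℕ arises from a multiplicity sequence: writing S = {s_0 = 0 < s_1 < s_2 < ...}, the sequence of differences m_i = s_i - s_{i-1} is nonincreasing, eventually 1, and each m_n is a sum of consecutive subsequent terms m_{n+1} + ... + m_{s(n)} for some s(n) ≥ n+1. -/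
lemma tele_sum (f : ℕ → ℕ) (hf : Monotone f) (a b : ℕ) (h : a ≤ b) :
    ∑ l ∈ Finset.Ico a b, (f (l + 1) - f l) = f b - f a := by
  induction b, h using Nat.le_induction with
  | base => simp
  | succ b hb ih =>
    rw [Finset.sum_Ico_succ_top hb, ih]
    have h1 : f a ≤ f b := hf hb
    have h2 : f b ≤ f (b + 1) := hf (Nat.le_succ b)
    omega

/-- Every Arf numerical semigroup `S ≠ ℕ` arises from a multiplicity sequence:
enumerating `S = {s₀ = 0 < s₁ < s₂ < ⋯}` by a strictly monotone map `e` with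
range `S`, the difference sequence `m i = e (i+1) - e i` is nonincreasing,
eventually `1`, and each entry is a sum of consecutive subsequent entries. -/
theorem stmt7 (S : Set ℕ) (hNS : IsNumericalSemigroup S) (hArf : IsArf S)
    (hne : S ≠ Set.univ) :
    ∃ e : ℕ → ℕ, StrictMono e ∧ e 0 = 0 ∧ Set.range e = S ∧
      (∀ i, e (i + 2) - e (i + 1) ≤ e (i + 1) - e i) ∧
      (∃ k, ∀ i, k ≤ i → e (i + 1) - e i = 1) ∧
      (∀ i, ∃ s, i < s ∧
        e (i + 1) - e i = ∑ l ∈ Finset.Ioc i s, (e (l + 1) - e l)) := by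
  obtain ⟨h0, hadd, hcof⟩ := hNS
  have hinf : (setOf (· ∈ S)).Infinite := by
    exact Set.infinite_of_finite_compl hcof
  set e := Nat.nth (· ∈ S) with he
  have hsm : StrictMono e := Nat.nth_strictMono hinf
  have hmem : ∀ i, e i ∈ S := fun i => Nat.nth_mem_of_infinite hinf i
  have hrange : Set.range e = S := by
    have := Nat.range_nth_of_infinite hinf
    simpa using this
  -- key Arf consequence: 2 e(i+1) - e i ∈ S, as e j for some j ≥ i+2
  have key : ∀ i, ∃ j, i + 2 ≤ j ∧ e j = e (i + 1) + e (i + 1) - e i := by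
    intro i
    have ht : e (i + 1) + e (i + 1) - e i ∈ S :=
      hArf (e i) (hmem i) (e (i + 1)) (hmem (i + 1)) (e (i + 1)) (hmem (i + 1))
        (hsm (Nat.lt_succ_self i)).le (hsm (Nat.lt_succ_self i)).le
    obtain ⟨j, hj⟩ : ∃ j, e j = e (i + 1) + e (i + 1) - e i := by
      have := hrange ▸ ht
      exact this
    refine ⟨j, ?_, hj⟩
    have hlt : e (i + 1) < e j := by
      have := hsm (show i < i + 1 by omega)
      omega
    have := hsm.lt_iff_lt.mp hlt
    omega
  refine ⟨e, hsm, ?_, hrange, ?_, ?_, ?_⟩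
  · have : sInf (setOf (· ∈ S)) = 0 := by
      apply Nat.sInf_eq_zero.mpr
      left; exact h0
    rw [he, Nat.nth_zero]; exact this
  · intro i
    obtain ⟨j, hj2, hje⟩ := key i
    have h1 : e (i + 2) ≤ e j := hsm.monotone hj2
    have h2 : e i < e (i + 1) := hsm (Nat.lt_succ_self i)
    have h3 : e (i + 1) < e (i + 2) := hsm (Nat.lt_succ_self (i + 1))
    omega
  · -- eventually 1
    obtain ⟨N, hN⟩ : ∃ N, ∀ n, N ≤ n → n ∈ S := by
      rcases Set.eq_empty_or_nonempty Sᶜ with h | h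
      · exact ⟨0, fun n _ => by
          by_contra hn
          exact Set.eq_empty_iff_forall_notMem.mp h n hn⟩
      · obtain ⟨m, hm⟩ := Set.Finite.exists_maximalFor id _ hcof h
        refine ⟨m + 1, fun n hn => ?_⟩
        by_contra hns
        have := hm.2 hns
        simp only [id] at this
        omega
    refine ⟨N, fun i hi => ?_⟩
    have hei : N ≤ e i := le_trans hi (hsm.le_apply)
    have hmem1 : e i + 1 ∈ S := hN _ (by omega)
    obtain ⟨j, hj⟩ : ∃ j, e j = e i + 1 := by
      have : e i + 1 ∈ Set.range e := by rw [hrange]; exact hmem1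
      exact this
    have hij : i < j := hsm.lt_iff_lt.mp (by omega)
    have : e (i + 1) ≤ e j := hsm.monotone hij
    have h2 : e i < e (i + 1) := hsm (Nat.lt_succ_self i)
    omega
  · intro i
    obtain ⟨j, hj2, hje⟩ := key i
    refine ⟨j - 1, by omega, ?_⟩
    have hIco : Finset.Ioc i (j - 1) = Finset.Ico (i + 1) j := by
      ext x; simp [Finset.mem_Ioc, Finset.mem_Ico]; omega
    rw [hIco, tele_sum e hsm.monotone _ _ (by omega)]
    have h2 : e i < e (i + 1) := hsm (Nat.lt_succ_self i)
    omega
end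

section
/- Let n > 1 and let M = (m_1, m_2, ..., m_k) with k ≥ 2 be a multiplicity sequence whose associated Arf semigroup has conductor n. Then 2 ≤ m_1 < n - 1, the truncated sequence (m_2, ..., m_k) is a multiplicity sequence whose associated Arf semigroup S' has conductor n - m_1 (or S' = ℕ if the truncation is all 1s), m_1 ∈ S', and m_2 ≤ m_1. -/
def HasConductor (S : Set ℕ) (c : ℕ) : Prop :=
  IsLeast {c' : ℕ | ∀ n : ℕ, c' ≤ n → n ∈ S} c

lemma iocSum (f : ℕ → ℕ) (a b : ℕ) :
    ∑ l ∈ Finset.Ioc a b, f l = ∑ i ∈ Finset.range (b - a), f (a + 1 + i) := by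
  rw [← Finset.Ico_add_one_add_one_eq_Ioc, Finset.sum_Ico_eq_sum_range, Nat.add_sub_add_right]

lemma condAS (m : ℕ → ℕ) (k : ℕ) (h1 : ∀ i, 1 ≤ m i) (hk : 1 ≤ k)
    (hlast : 2 ≤ m (k - 1)) :
    HasConductor (AS m k) (∑ i ∈ Finset.range k, m i) := by
  constructor
  · intro x hx
    exact Or.inr hx
  · intro c hc
    by_contra h
    push_neg at h
    have hC2 : 2 ≤ ∑ i ∈ Finset.range k, m i :=
      le_trans hlast (Finset.single_le_sum (fun i _ => Nat.zero_le _)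
        (Finset.mem_range.mpr (by omega)))
    have hmem : (∑ i ∈ Finset.range k, m i) - 1 ∈ AS m k := hc _ (by omega)
    simp only [AS, Set.mem_union, Set.mem_setOf_eq] at hmem
    rcases hmem with ⟨j, hj, hje⟩ | h2
    · rcases Nat.lt_or_ge j k with hj' | hj'
      · have hsub : Finset.range j ⊆ Finset.range (k - 1) :=
          Finset.range_subset_range.mpr (by omega)
        have h4 : ∑ i ∈ Finset.range j, m i ≤ ∑ i ∈ Finset.range (k - 1), m i :=
          Finset.sum_le_sum_of_subset hsub
        have h5 : ∑ i ∈ Finset.range k, m i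
            = ∑ i ∈ Finset.range (k - 1), m i + m (k - 1) := by
          conv_lhs => rw [show k = k - 1 + 1 from by omega]
          rw [Finset.sum_range_succ]
        omega
      · have : j = k := by omega
        subst this
        omega
    · omega

/-- Key recursion: let `n > 1` and `M = (m₁, …, m_k)` (`k ≥ 2`, last entry
`m_k > 1`) be a multiplicity sequence whose associated Arf semigroup has
conductor `n`.  Then `2 ≤ m₁ < n - 1`, the truncated sequence
`(m₂, …, m_k)` is a multiplicity sequence whose Arf semigroup `S'` has
conductor `n - m₁` (or `S' = ℕ` if the truncation is all `1`s), `m₁ ∈ S'`,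
and `m₂ ≤ m₁`. -/
theorem stmt9 (n : ℕ) (hn : 1 < n) (m : ℕ → ℕ) (k : ℕ)
    (hM : IsMultiplicitySequence m k) (hk : 2 ≤ k) (hlast : 2 ≤ m (k - 1))
    (hcond : HasConductor (AS m k) n) :
    2 ≤ m 0 ∧ m 0 < n - 1 ∧ m 1 ≤ m 0 ∧
    IsMultiplicitySequence (fun i => m (i + 1)) (k - 1) ∧
    m 0 ∈ AS (fun i => m (i + 1)) (k - 1) ∧
    (HasConductor (AS (fun i => m (i + 1)) (k - 1)) (n - m 0) ∨
      ((∀ i, m (i + 1) = 1) ∧ AS (fun i => m (i + 1)) (k - 1) = Set.univ)) := by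
  obtain ⟨h1, hmono, hone, hrec⟩ := hM
  -- monotonicity
  have hanti : ∀ i j, i ≤ j → m j ≤ m i := by
    intro i j hij
    induction j with
    | zero => simp_all
    | succ j ih =>
      rcases Nat.lt_or_ge i (j+1) with h | h
      · exact le_trans (hmono j) (ih (by omega))
      · have : i = j + 1 := by omega
        subst this; rfl
  have hm0 : 2 ≤ m 0 := le_trans hlast (hanti 0 (k-1) (Nat.zero_le _))
  -- n = total sum
  have hn' : n = ∑ i ∈ Finset.range k, m i :=
    hcond.unique (condAS m k h1 (by omega) hlast)
  have hsplit : ∑ i ∈ Finset.range k, m i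
      = ∑ i ∈ Finset.range (k - 1), m (i + 1) + m 0 := by
    conv_lhs => rw [show k = (k - 1) + 1 by omega, Finset.sum_range_succ' m (k-1)]
  -- m(k-1) appears in truncated sum
  have hlastsum : m (k - 1) ≤ ∑ i ∈ Finset.range (k - 1), m (i + 1) := by
    have := Finset.single_le_sum (f := fun i => m (i + 1))
      (fun i _ => Nat.zero_le _) (Finset.mem_range.mpr (show k - 2 < k - 1 by omega))
    calc m (k - 1) = m (k - 2 + 1) := by congr 1; omega
      _ ≤ _ := this
  have hnm0 : m 0 + 2 ≤ n := by omega
  refine ⟨hm0, by omega, hmono 0, ?_, ?_, ?_⟩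
  · refine ⟨fun i => h1 _, fun i => hmono _, fun i hi => hone _ (by omega), ?_⟩
    intro i
    obtain ⟨s, hs, hse⟩ := hrec (i + 1)
    refine ⟨s - 1, by omega, ?_⟩
    show m (i + 1) = ∑ l ∈ Finset.Ioc i (s - 1), m (l + 1)
    rw [hse, iocSum, iocSum]
    apply Finset.sum_congr (by congr 1; omega)
    intro x _
    congr 1
    omega
  · obtain ⟨s, hs, hse⟩ := hrec 0
    rcases le_or_gt s (k - 1) with h | h
    · left
      refine ⟨s, h, ?_⟩
      show m 0 = ∑ i ∈ Finset.range s, m (i + 1)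
      rw [hse, iocSum, Nat.sub_zero]
      apply Finset.sum_congr rfl
      intro x _
      congr 1
      omega
    · right
      show ∑ i ∈ Finset.range (k-1), m (i+1) ≤ m 0
      rw [hse]
      calc ∑ i ∈ Finset.range (k-1), m (i+1)
          = ∑ l ∈ Finset.Ioc 0 (k-1), m l := by
            rw [iocSum, Nat.sub_zero]
            apply Finset.sum_congr rfl
            intro x _
            congr 1
            omega
        _ ≤ ∑ l ∈ Finset.Ioc 0 s, m l :=
            Finset.sum_le_sum_of_subset (Finset.Ioc_subset_Ioc_right (by omega))
  · left
    have hc' : HasConductor (AS (fun i => m (i + 1)) (k - 1))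
        (∑ i ∈ Finset.range (k - 1), m (i + 1)) := by
      apply condAS _ _ (fun i => h1 _) (by omega)
      show 2 ≤ m (k - 1 - 1 + 1)
      calc 2 ≤ m (k - 1) := hlast
        _ = m (k - 1 - 1 + 1) := by congr 1; omega
    have : n - m 0 = ∑ i ∈ Finset.range (k - 1), m (i + 1) := by omega
    rwa [this]
end

section
/- Conversely to the recursion: if n > 1, m is an integer with 2 ≤ m < n - 1, M' is a multiplicity sequence whose associated Arf semigroup S' has conductor n - m, m ∈ S', and m ≥ (first entry of M'), then prepending m to M' yields a multiplicity sequence whose associated Arf semigroup has conductor n. -/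
private lemma sumIoc (g : ℕ → ℕ) (a b : ℕ) :
    ∑ l ∈ Finset.Ioc a b, g l = ∑ i ∈ Finset.range (b - a), g (a + 1 + i) := by
  rw [show Finset.Ioc a b = Finset.Ico (a+1) (b+1) by ext x; simp,
    Finset.sum_Ico_eq_sum_range]
  have : b + 1 - (a + 1) = b - a := by omega
  rw [this]

/-- Converse to the recursion: if `n > 1`, `2 ≤ m < n - 1`, `M'` is a
multiplicity sequence whose associated Arf semigroup `S'` has conductor
`n - m`, `m ∈ S'`, and `m` is at least the first entry of `M'`, then
prepending `m` to `M'` yields a multiplicity sequence whose associated Arf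
semigroup has conductor `n`. -/
theorem stmt10 (n : ℕ) (hn : 1 < n) (m : ℕ) (hm2 : 2 ≤ m) (hmn : m < n - 1)
    (m' : ℕ → ℕ) (k' : ℕ) (hM' : IsMultiplicitySequence m' k')
    (hcond' : HasConductor (AS m' k') (n - m))
    (hmem : m ∈ AS m' k') (hge : m' 0 ≤ m) :
    IsMultiplicitySequence (fun i => if i = 0 then m else m' (i - 1)) (k' + 1) ∧
    HasConductor (AS (fun i => if i = 0 then m else m' (i - 1)) (k' + 1)) n := by
  obtain ⟨h1, h2, h3, h4⟩ := hM'
  obtain ⟨hub, hlb⟩ := hcond'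
  simp only [Set.mem_setOf_eq] at hub
  set f : ℕ → ℕ := fun i => if i = 0 then m else m' (i - 1) with hf
  have hfs : ∀ i, f (i + 1) = m' i := by intro i; simp [hf]
  have hf0 : f 0 = m := by simp [hf]
  -- partial sums of f
  have hsum : ∀ j, ∑ i ∈ Finset.range (j + 1), f i = m + ∑ i ∈ Finset.range j, m' i := by
    intro j
    rw [Finset.sum_range_succ']
    simp only [hfs, hf0]
    omega
  set C' : ℕ := ∑ i ∈ Finset.range k', m' i with hC'
  -- tail sums of m' beyond k'
  have htail : ∀ t, ∑ i ∈ Finset.range (k' + t), m' i = C' + t := by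
    intro t
    induction t with
    | zero => simp [hC']
    | succ t ih =>
      rw [show k' + (t + 1) = (k' + t) + 1 by omega, Finset.sum_range_succ, ih,
        h3 (k' + t) (by omega)]
      omega
  -- n - m - 1 is not in AS m' k'
  have hnm2 : 2 ≤ n - m := by omega
  have hnm1 : n - m - 1 ∉ AS m' k' := by
    intro h
    have hmem' : (n - m - 1) ∈ {c' : ℕ | ∀ x : ℕ, c' ≤ x → x ∈ AS m' k'} := by
      intro x hx
      rcases eq_or_lt_of_le hx with rfl | hlt
      · exact h
      · exact hub x (by omega)
    have := hlb hmem'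
    omega
  -- transfer lemma
  have htrans : ∀ y ∈ AS m' k', m + y ∈ AS f (k' + 1) := by
    intro y hy
    rcases hy with ⟨j, hj, rfl⟩ | hy
    · exact Or.inl ⟨j + 1, by omega, (hsum j).symm⟩
    · simp only [Set.mem_setOf_eq] at hy
      right
      rw [hsum k']
      simp only [Set.mem_setOf_eq]
      omega
  have hIocf : ∀ a b : ℕ, ∑ l ∈ Finset.Ioc a b, f l = ∑ i ∈ Finset.range (b - a), m' (a + i) := by
    intro a b
    rw [sumIoc]
    refine Finset.sum_congr rfl fun i _ => ?_
    rw [show a + 1 + i = (a + i) + 1 by omega, hfs]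
  constructor
  · refine ⟨?_, ?_, ?_, ?_⟩
    · intro i
      cases i with
      | zero => rw [hf0]; omega
      | succ i => rw [hfs]; exact h1 i
    · intro i
      cases i with
      | zero => rw [hfs, hf0]; exact hge
      | succ i => rw [hfs, hfs]; exact h2 i
    · intro i hi
      have : i - 1 + 1 = i := by omega
      rw [← this, hfs]
      exact h3 (i - 1) (by omega)
    · intro i
      cases i with
      | zero =>
        rcases hmem with ⟨j, hj, hmj⟩ | hm
        · have hj1 : 1 ≤ j := by
            rcases Nat.eq_zero_or_pos j with rfl | h
            · simp at hmj; omega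
            · omega
          refine ⟨j, by omega, ?_⟩
          rw [hf0, hIocf]
          simpa using hmj
        · simp only [Set.mem_setOf_eq, ← hC'] at hm
          refine ⟨k' + (m - C'), ?_, ?_⟩
          · rcases Nat.eq_zero_or_pos k' with rfl | h
            · simp [hC'] at hm ⊢; omega
            · omega
          · rw [hf0, hIocf]
            simp only [Nat.sub_zero, zero_add]
            rw [show (fun i => m' i) = m' from rfl] at *
            have := htail (m - C')
            omega
      | succ i =>
        obtain ⟨s, hs, hsum'⟩ := h4 i
        refine ⟨s + 1, by omega, ?_⟩
        rw [hfs, hIocf]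
        rw [hsum', sumIoc]
        refine Finset.sum_congr (by rw [show s + 1 - (i + 1) = s - i by omega])
          fun l _ => by rw [show i + 1 + l = (i + 1) + l by omega]
  · constructor
    · intro x hx
      have hx' : n - m ≤ x - m := by omega
      have := htrans (x - m) (hub (x - m) hx')
      rwa [show m + (x - m) = x by omega] at this
    · intro c hc
      by_contra hcn
      push_neg at hcn
      have h1' : n - 1 ∈ AS f (k' + 1) := hc (n - 1) (by omega)
      rcases h1' with ⟨j, hj, heq⟩ | h
      · cases j with
        | zero => simp at heq; omega
        | succ j =>
          rw [hsum j] at heq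
          exact hnm1 (Or.inl ⟨j, by omega, by omega⟩)
      · simp only [Set.mem_setOf_eq] at h
        rw [hsum k'] at h
        exact hnm1 (Or.inr (by simp only [Set.mem_setOf_eq, ← hC']; omega))
end

section
/- If S ⊆ ℕ^r is an Arf good semigroup, then each projection π_i(S) = {v[i] : v ∈ S} is an Arf numerical semigroup. -/
def IsGoodSemigroup {r : ℕ} (S : Set (Fin r → ℕ)) : Prop :=
  (0 ∈ S) ∧ (∀ a ∈ S, ∀ b ∈ S, a + b ∈ S) ∧
  (∀ a ∈ S, ∀ b ∈ S, (fun i => min (a i) (b i)) ∈ S) ∧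
  (∀ a ∈ S, ∀ b ∈ S, ∀ i, a i = b i →
    ∃ c ∈ S, a i < c i ∧
      ∀ j, j ≠ i → min (a j) (b j) ≤ c j ∧ (a j ≠ b j → c j = min (a j) (b j))) ∧
  (∃ δ : Fin r → ℕ, ∀ w : Fin r → ℕ, δ + w ∈ S)

/-- `S` is Arf if for every `α ∈ S` the set `S(α) - α` is closed under
addition, i.e. `β + γ - α ∈ S` whenever `β, γ ∈ S` lie above `α`. -/
def IsArfGood {r : ℕ} (S : Set (Fin r → ℕ)) : Prop :=
  ∀ α ∈ S, ∀ β ∈ S, ∀ γ ∈ S, α ≤ β → α ≤ γ → β + γ - α ∈ S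

/-- If `S ⊆ ℕ^r` is an Arf good semigroup, each projection
`π_i(S) = {v i : v ∈ S}` is an Arf numerical semigroup. -/
theorem stmt14 (r : ℕ) (S : Set (Fin r → ℕ)) (hS : IsGoodSemigroup S)
    (hArf : IsArfGood S) (i : Fin r) :
    IsNumericalSemigroup {x : ℕ | ∃ v ∈ S, v i = x} ∧
    IsArf {x : ℕ | ∃ v ∈ S, v i = x} := by
  obtain ⟨h0, hadd, hmin, _, δ, hδ⟩ := hS
  constructor
  · refine ⟨⟨0, h0, rfl⟩, ?_, ?_⟩
    · rintro a ⟨va, hva, rfl⟩ b ⟨vb, hvb, rfl⟩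
      exact ⟨va + vb, hadd va hva vb hvb, rfl⟩
    · apply Set.Finite.subset (Set.finite_Iio (δ i))
      intro x hx
      by_contra hlt
      simp only [Set.mem_Iio, not_lt] at hlt
      exact hx ⟨δ + fun j => if j = i then x - δ i else 0,
        hδ _, by simp [Nat.add_sub_cancel' hlt]⟩
  · rintro s ⟨vs, hvs, rfl⟩ a ⟨va, hva, rfl⟩ b ⟨vb, hvb, rfl⟩ hsa hsb
    set α : Fin r → ℕ := fun j => min (vs j) (min (va j) (vb j)) with hα
    have hαS : α ∈ S := hmin vs hvs _ (hmin va hva vb hvb)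
    have hαa : α ≤ va := fun j => le_trans (min_le_right _ _) (min_le_left _ _)
    have hαb : α ≤ vb := fun j => le_trans (min_le_right _ _) (min_le_right _ _)
    have key := hArf α hαS va hva vb hvb hαa hαb
    exact ⟨va + vb - α, key, by simp [hα]; omega⟩
end

section
/- Let T be the multiplicity tree of a local Arf good semigroup S ⊆ ℕ^r with multiplicity sequences M_1, ..., M_r along its branches, and define d(i) as the minimal level j such that M_i[j] = 1 and the i-th branch is not glued to any other branch at level j. Then the conductor of S is the vector c with c[i] = Σ_{k=1}^{d(i)-1} M_i[k] for each i. -/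
-- Nodes of the tree: `N i j` is the node of branch `i` at level `j`
-- (levels counted from `0`, so level `j` here is level `j+1` of the paper).
-- Branches `i` and `h` are glued at level `j` exactly when `N i j = N h j`.

/-- The sum of the (distinct) nodes of the finite subtree of the tree `N`
rooted at the root in which branch `i` contributes its first `δ i` levels;
each node is counted once, via the smallest branch passing through it. -/
def treeSum {r : ℕ} (N : Fin r → ℕ → (Fin r → ℕ)) (δ : Fin r → ℕ) :
    Fin r → ℕ :=
  ∑ i : Fin r, ∑ j ∈ Finset.range (δ i),
    if ∀ h, h < i → N h j ≠ N i j then N i j else 0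

/-- `δ` describes a subtree (rooted at the root): it is closed under gluing,
i.e. if a node of branch `i` is included and branch `h` is glued to branch `i`
there, then that node is also included as a node of branch `h`. -/
def IsSubtree {r : ℕ} (N : Fin r → ℕ → (Fin r → ℕ)) (δ : Fin r → ℕ) : Prop :=
  ∀ i h j, j < δ i → N i j = N h j → j < δ h

/-- The local Arf good semigroup determined by the multiplicity tree `N`:
`{0}` together with all sums of nodes over finite subtrees rooted at the
root. -/
def semigroupOfTree {r : ℕ} (N : Fin r → ℕ → (Fin r → ℕ)) :
    Set (Fin r → ℕ) :=
  {0} ∪ {v | ∃ δ : Fin r → ℕ, (∀ i, 1 ≤ δ i) ∧ IsSubtree N δ ∧ v = treeSum N δ}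

section Aux
variable {r : ℕ} (N : Fin r → ℕ → (Fin r → ℕ))

lemma treeSum_apply' (δ : Fin r → ℕ)
    (hδ : IsSubtree N δ)
    (hsupp : ∀ i h : Fin r, ∀ j : ℕ, N i j h = 0 ↔ N h j ≠ N i j) (i : Fin r) :
    treeSum N δ i = ∑ j ∈ Finset.range (δ i), N i j i := by
  classical
  set B := Finset.univ.sup δ with hBdef
  have hB : ∀ x, δ x ≤ B := fun x => Finset.le_sup (Finset.mem_univ x)
  have hsa : treeSum N δ i = ∑ i' : Fin r, ∑ j ∈ Finset.range (δ i'),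
      (if ∀ h, h < i' → N h j ≠ N i' j then N i' j i else 0) := by
    simp [treeSum, Finset.sum_apply, apply_ite (fun f : Fin r → ℕ => f i)]
  rw [hsa]
  have e1 : ∀ i' : Fin r, (∑ j ∈ Finset.range (δ i'),
      (if ∀ h, h < i' → N h j ≠ N i' j then N i' j i else 0)) =
      ∑ j ∈ Finset.range B, (if j < δ i' then
        (if ∀ h, h < i' → N h j ≠ N i' j then N i' j i else 0) else 0) := by
    intro i'
    calc (∑ j ∈ Finset.range (δ i'),
        (if ∀ h, h < i' → N h j ≠ N i' j then N i' j i else 0))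
        = ∑ j ∈ Finset.range (δ i'), (if j < δ i' then
          (if ∀ h, h < i' → N h j ≠ N i' j then N i' j i else 0) else 0) :=
          Finset.sum_congr rfl (fun j hj => (if_pos (Finset.mem_range.1 hj)).symm)
      _ = _ := Finset.sum_subset (Finset.range_subset_range.2 (hB i'))
          (fun j _ hj => if_neg (fun hlt => hj (Finset.mem_range.2 hlt)))
  simp only [e1]
  rw [Finset.sum_comm]
  have key : ∀ j : ℕ, (∑ i' : Fin r, (if j < δ i' then
      (if ∀ h, h < i' → N h j ≠ N i' j then N i' j i else 0) else 0)) =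
      if j < δ i then N i j i else 0 := by
    intro j
    by_cases hj : j < δ i
    · rw [if_pos hj]
      set G := Finset.univ.filter (fun h => N h j = N i j) with hGdef
      have hiG : i ∈ G := by simp [hGdef]
      have hGne : G.Nonempty := ⟨i, hiG⟩
      set m := G.min' hGne with hmdef
      have hmG : m ∈ G := G.min'_mem hGne
      have hm : N m j = N i j := (Finset.mem_filter.1 hmG).2
      have hmin : ∀ h ∈ G, m ≤ h := fun h => G.min'_le h
      have : (∑ i' : Fin r, (if j < δ i' then
          (if ∀ h, h < i' → N h j ≠ N i' j then N i' j i else 0) else 0)) =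
          (if j < δ m then
          (if ∀ h, h < m → N h j ≠ N m j then N m j i else 0) else 0) := by
        apply Finset.sum_eq_single m
        · intro b _ hbm
          split_ifs with h1 h2
          · refine (hsupp b i j).2 ?_
            intro he
            have hbG : b ∈ G := Finset.mem_filter.2 ⟨Finset.mem_univ b, he.symm⟩
            have hmb : m < b := (hmin b hbG).lt_of_ne (fun h => hbm h.symm)
            exact h2 m hmb (hm.trans he)
          · rfl
          · rfl
        · intro h; exact absurd (Finset.mem_univ m) h
      rw [this]
      have hjm : j < δ m := hδ i m j hj hm.symm
      have hmc : ∀ h, h < m → N h j ≠ N m j := by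
        intro h hh he
        exact absurd (hmin h (Finset.mem_filter.2 ⟨Finset.mem_univ h, he.trans hm⟩))
          (not_le.2 hh)
      rw [if_pos hjm, if_pos hmc]
      exact congrFun hm i
    · rw [if_neg hj]
      apply Finset.sum_eq_zero
      intro b _
      split_ifs with h1 h2
      · refine (hsupp b i j).2 ?_
        intro he
        exact hj (hδ b i j h1 he.symm)
      · rfl
      · rfl
  simp only [key]
  calc (∑ j ∈ Finset.range B, if j < δ i then N i j i else 0)
      = ∑ j ∈ Finset.range (δ i), (if j < δ i then N i j i else 0) :=
        (Finset.sum_subset (Finset.range_subset_range.2 (hB i))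
          (fun j _ hj => if_neg (fun hlt => hj (Finset.mem_range.2 hlt)))).symm
    _ = ∑ j ∈ Finset.range (δ i), N i j i :=
        Finset.sum_congr rfl (fun j hj => if_pos (Finset.mem_range.1 hj))

lemma mult_pos (hsupp : ∀ i h : Fin r, ∀ j : ℕ, N i j h = 0 ↔ N h j ≠ N i j)
    (i : Fin r) (j : ℕ) : 1 ≤ N i j i :=
  Nat.one_le_iff_ne_zero.2 (fun h0 => ((hsupp i i j).1 h0) rfl)

lemma mult_step
    (htree : ∀ i h : Fin r, ∀ j j' : ℕ, j ≤ j' → N i j' = N h j' → N i j = N h j)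
    (hsum : ∀ i : Fin r, ∀ j : ℕ, ∃ δ : Fin r → ℕ,
      1 ≤ δ i ∧ (∀ h, 1 ≤ δ h → N h j = N i j) ∧
      (∀ h h' : Fin r, ∀ j' : ℕ, j + 1 ≤ j' → j' < j + 1 + δ h →
        N h j' = N h' j' → N h' j = N i j → j' < j + 1 + δ h') ∧
      N i j = ∑ h : Fin r, ∑ j' ∈ Finset.Ico (j + 1) (j + 1 + δ h),
        if ∀ h', h' < h → N h' j' ≠ N h j' then N h j' else 0)
    (i : Fin r) (j : ℕ) : N i (j + 1) i ≤ N i j i := by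
  classical
  obtain ⟨δ', hδ1, -, h3, h4⟩ := hsum i j
  set G := Finset.univ.filter (fun h => N h (j+1) = N i (j+1)) with hGdef
  have hiG : i ∈ G := by simp [hGdef]
  have hGne : G.Nonempty := ⟨i, hiG⟩
  set m := G.min' hGne with hmdef
  have hmG : m ∈ G := G.min'_mem hGne
  have hm : N m (j+1) = N i (j+1) := (Finset.mem_filter.1 hmG).2
  have hmin : ∀ h ∈ G, m ≤ h := fun h => G.min'_le h
  have hglue : N m j = N i j := htree m i j (j+1) (Nat.le_succ j) hm
  have hδm : 1 ≤ δ' m := by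
    have := h3 i m (j+1) le_rfl (by omega) hm.symm hglue
    omega
  have hmc : ∀ h', h' < m → N h' (j+1) ≠ N m (j+1) := by
    intro h' hh he
    exact absurd (hmin h' (Finset.mem_filter.2 ⟨Finset.mem_univ h', he.trans hm⟩))
      (not_le.2 hh)
  have hNj : N i j i = ∑ h : Fin r, ∑ j' ∈ Finset.Ico (j+1) (j+1+δ' h),
      (if ∀ h', h' < h → N h' j' ≠ N h j' then N h j' i else 0) := by
    have := congrFun h4 i
    simpa [Finset.sum_apply, apply_ite (fun f : Fin r → ℕ => f i)] using this
  rw [hNj]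
  have hmem : j+1 ∈ Finset.Ico (j+1) (j+1+δ' m) := by
    simp only [Finset.mem_Ico]
    omega
  have hval : (if ∀ h', h' < m → N h' (j+1) ≠ N m (j+1) then N m (j+1) i else 0)
      = N i (j+1) i := by
    rw [if_pos hmc]; exact congrFun hm i
  calc N i (j+1) i
      = (if ∀ h', h' < m → N h' (j+1) ≠ N m (j+1) then N m (j+1) i else 0) :=
        hval.symm
    _ ≤ ∑ j' ∈ Finset.Ico (j+1) (j+1+δ' m),
        (if ∀ h', h' < m → N h' j' ≠ N m j' then N m j' i else 0) :=
        Finset.single_le_sum (f := fun j' => if ∀ h', h' < m → N h' j' ≠ N m j' then N m j' i else 0) (fun _ _ => Nat.zero_le _) hmem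
    _ ≤ _ := Finset.single_le_sum (f := fun h => ∑ j' ∈ Finset.Ico (j+1) (j+1+δ' h),
        (if ∀ h', h' < h → N h' j' ≠ N h j' then N h j' i else 0))
        (fun _ _ => Nat.zero_le _) (Finset.mem_univ m)

end Aux

/-- Proposition 1: let `T` be the multiplicity tree of a local Arf good
semigroup `S ⊆ ℕ^r`, with nodes `N i j` satisfying the multiplicity-tree
axioms, and let `d i` be the least level `j` such that the `i`-th entry of
`N i j` is `1` and branch `i` is not glued to any other branch at level `j`.
Then the conductor of `S` is the vector whose `i`-th coordinate is the sum of
the `i`-th coordinates of the first `d i` nodes of branch `i`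
(in the paper's 1-indexed notation, `c[i] = Σ_{k=1}^{d(i)-1} M_i[k]`). -/
theorem stmt15 (r : ℕ) (hr : 1 ≤ r) (N : Fin r → ℕ → (Fin r → ℕ))
    -- the tree is local: all branches share the root
    (hroot : ∀ i j : Fin r, N i 0 = N j 0)
    -- nodes that are glued at some level are glued at all earlier levels
    (htree : ∀ i h : Fin r, ∀ j j' : ℕ, j ≤ j' → N i j' = N h j' → N i j = N h j)
    -- axiom 1: eventually each branch consists of the standard basis vector
    (hstable : ∃ L : ℕ, ∀ j, L ≤ j → ∀ i, N i j = Pi.single i 1)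
    -- axiom 2: the `h`-th coordinate of a node vanishes iff the node is not
    -- in the `h`-th branch
    (hsupp : ∀ i h : Fin r, ∀ j : ℕ, N i j h = 0 ↔ N h j ≠ N i j)
    -- axiom 3: each node is the sum of the nodes of a finite subtree of `T`
    -- rooted in it (i.e. of nodes at deeper levels of the branches through it)
    (hsum : ∀ i : Fin r, ∀ j : ℕ, ∃ δ : Fin r → ℕ,
      1 ≤ δ i ∧ (∀ h, 1 ≤ δ h → N h j = N i j) ∧
      (∀ h h' : Fin r, ∀ j' : ℕ, j + 1 ≤ j' → j' < j + 1 + δ h →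
        N h j' = N h' j' → N h' j = N i j → j' < j + 1 + δ h') ∧
      N i j = ∑ h : Fin r, ∑ j' ∈ Finset.Ico (j + 1) (j + 1 + δ h),
        if ∀ h', h' < h → N h' j' ≠ N h j' then N h j' else 0)
    -- `d i` is the least level at which branch `i` has entry 1 and is unglued
    (d : Fin r → ℕ)
    (hd : ∀ i, IsLeast {j : ℕ | N i j i = 1 ∧ ∀ h, h ≠ i → N h j ≠ N i j} (d i)) :
    IsLeast {c : Fin r → ℕ | ∀ w : Fin r → ℕ, c + w ∈ semigroupOfTree N}
      (fun i => ∑ j ∈ Finset.range (d i), N i j i) := by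
  classical
  have hpos := mult_pos N hsupp
  have hanti : ∀ i : Fin r, Antitone (fun j => N i j i) :=
    fun i => antitone_nat_of_succ_le (fun j => mult_step N htree hsum i j)
  have hone : ∀ i : Fin r, ∀ j, d i ≤ j → N i j i = 1 := by
    intro i j hij
    exact le_antisymm (((hanti i) hij).trans_eq (hd i).1.1) (hpos i j)
  have glueLt : ∀ i h : Fin r, ∀ j, h ≠ i → N h j = N i j → j < d i := by
    intro i h j hne hg
    by_contra hlt
    push_neg at hlt
    exact (hd i).1.2 h hne (htree h i (d i) j hlt hg)
  constructor
  · -- membership: it is a conductor candidate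
    intro w
    simp only [semigroupOfTree, Set.mem_union, Set.mem_singleton_iff,
      Set.mem_setOf_eq]
    by_cases hall : ∀ x, 1 ≤ d x + w x
    · have hsub : IsSubtree N (fun x => d x + w x) := by
        intro i' h j hj hg
        by_cases he : h = i'
        · subst he; exact hj
        · exact lt_of_lt_of_le (glueLt h i' j (Ne.symm he) hg) (Nat.le_add_right _ _)
      refine Or.inr ⟨fun x => d x + w x, hall, hsub, ?_⟩
      funext x
      rw [treeSum_apply' N _ hsub hsupp x]
      have h2 : ∑ j ∈ Finset.Ico (d x) (d x + w x), N x j x = w x := by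
        rw [Finset.sum_congr rfl (fun j hj => hone x j (Finset.mem_Ico.1 hj).1)]
        simp
      have h3 : (∑ j ∈ Finset.range (d x), N x j x)
          + ∑ j ∈ Finset.Ico (d x) (d x + w x), N x j x
          = ∑ j ∈ Finset.range (d x + w x), N x j x := by
        rw [Finset.range_eq_Ico, Finset.range_eq_Ico]
        exact Finset.sum_Ico_consecutive (fun j => N x j x) (Nat.zero_le _) (Nat.le_add_right _ _)
      simp only [Pi.add_apply]
      rw [← h3, h2]
    · push_neg at hall
      obtain ⟨x0, hx0⟩ := hall
      have hd0 : d x0 = 0 := by omega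
      have hw0 : w x0 = 0 := by omega
      have hall' : ∀ h : Fin r, h = x0 := by
        intro h
        by_contra hne
        exact (hd x0).1.2 h hne (by rw [hd0]; exact hroot h x0)
      refine Or.inl ?_
      funext x
      have hx := hall' x
      subst hx
      simp [hd0, hw0]
  · -- lower bound
    intro c' hc'
    rw [Pi.le_def]
    intro i
    show (∑ j ∈ Finset.range (d i), N i j i) ≤ c' i
    by_contra hlt
    push_neg at hlt
    set s : ℕ → ℕ := fun n => ∑ j ∈ Finset.range n, N i j i with hsdef
    have hsv : ∀ n, s n = ∑ j ∈ Finset.range n, N i j i := fun n => rfl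
    have hssucc : ∀ n, s (n + 1) = s n + N i n i := fun n => Finset.sum_range_succ _ _
    have hsmono : StrictMono s := strictMono_nat_of_lt_succ (fun n => by
      have := hpos i n; rw [hssucc n]; omega)
    have hlt' : c' i < s (d i) := hlt
    by_cases hA : ∃ n, 1 ≤ n ∧ s n + 1 = s (d i)
    · obtain ⟨n, hn1, hsn⟩ := hA
      have hnd : n < d i := hsmono.lt_iff_lt.1 (by omega)
      have hMn : N i n i = 1 := by
        have h1 : s (n + 1) ≤ s (d i) := hsmono.monotone (by omega)
        have h2 := hssucc n
        have := hpos i n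
        omega
      have hglued : ∃ h, h ≠ i ∧ N h n = N i n := by
        by_contra hng
        push_neg at hng
        have hmem : n ∈ {j : ℕ | N i j i = 1 ∧ ∀ h, h ≠ i → N h j ≠ N i j} :=
          ⟨hMn, hng⟩
        exact absurd ((hd i).2 hmem) (by omega)
      obtain ⟨h, hhi, hglue⟩ := hglued
      set B := ∑ j ∈ Finset.range n, N h j h with hBdef
      set w : Fin r → ℕ := fun x => if x = i then s n - c' i else
        if x = h then B + 1 else 0 with hwdef
      have hwi : c' i + w i = s n := by
        simp only [hwdef, if_pos rfl]
        omega
      have hwh : c' h + w h = c' h + (B + 1) := by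
        simp [hwdef, hhi]
      have hmem := hc' w
      simp only [semigroupOfTree, Set.mem_union, Set.mem_singleton_iff,
        Set.mem_setOf_eq] at hmem
      rcases hmem with h0 | ⟨δ, hδ1, hδsub, heq⟩
      · have := congrFun h0 h
        simp only [Pi.add_apply, Pi.zero_apply] at this
        omega
      · have hti := congrFun heq i
        rw [treeSum_apply' N δ hδsub hsupp i] at hti
        simp only [Pi.add_apply] at hti
        have hseq : s (δ i) = s n := by rw [hsv]; omega
        have hδin : δ i = n := hsmono.injective hseq
        have hδh : δ h ≤ n := by
          by_contra hlt2
          push_neg at hlt2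
          have := hδsub h i n hlt2 hglue
          omega
        have hth := congrFun heq h
        rw [treeSum_apply' N δ hδsub hsupp h] at hth
        simp only [Pi.add_apply] at hth
        have hle : (∑ j ∈ Finset.range (δ h), N h j h) ≤ B :=
          Finset.sum_le_sum_of_subset (Finset.range_subset_range.2 hδh)
        omega
    · push_neg at hA
      set w : Fin r → ℕ := fun x => if x = i then s (d i) - 1 - c' i else 1
        with hwdef
      have hwi : c' i + w i = s (d i) - 1 := by
        simp only [hwdef, if_pos rfl]
        omega
      have hmem := hc' w
      simp only [semigroupOfTree, Set.mem_union, Set.mem_singleton_iff,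
        Set.mem_setOf_eq] at hmem
      rcases hmem with h0 | ⟨δ, hδ1, hδsub, heq⟩
      · by_cases hex : ∃ h : Fin r, h ≠ i
        · obtain ⟨h, hh⟩ := hex
          have := congrFun h0 h
          simp only [Pi.add_apply, Pi.zero_apply, hwdef, if_neg hh] at this
          omega
        · push_neg at hex
          have h0i := congrFun h0 i
          simp only [Pi.add_apply, Pi.zero_apply] at h0i
          have hs1 : s (d i) = 1 := by omega
          have hge : d i ≤ s (d i) := by
            rw [hsv]
            calc d i = ∑ _j ∈ Finset.range (d i), 1 := by simp
              _ ≤ _ := Finset.sum_le_sum (fun j _ => hpos i j)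
          have hdne : d i ≠ 0 := by
            intro h
            rw [h] at hs1
            simp [hsv] at hs1
          have hd1 : d i = 1 := by omega
          have hN0 : N i 0 i = 1 := by
            have := hsv 1
            rw [hd1] at hs1
            simpa [this, Finset.sum_range_one] using hs1
          have hmem0 : (0 : ℕ) ∈ {j : ℕ | N i j i = 1 ∧ ∀ h, h ≠ i → N h j ≠ N i j} :=
            ⟨hN0, fun h hne _ => hne (hex h)⟩
          exact absurd ((hd i).2 hmem0) (by omega)
      · have hti := congrFun heq i
        rw [treeSum_apply' N δ hδsub hsupp i] at hti
        simp only [Pi.add_apply] at hti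
        have : s (δ i) + 1 = s (d i) := by rw [hsv]; omega
        exact hA (δ i) (hδ1 i) this
end

section
/- Let M₁ and M₂ be two distinct multiplicity sequences, and for each define s_{i,k} as the integer with M_i[k] = Σ_{l=k+1}^{s_{i,k}} M_i[l]. Then the set {k : s_{1,k} ≠ s_{2,k}} is nonempty, so the compatibility Comp(M₁, M₂) = min{ min(s_{1,k}, s_{2,k}) : s_{1,k} ≠ s_{2,k} } is well defined and is a positive integer. -/
/-- Let `M₁ ≠ M₂` be multiplicity sequences and `s₁ k` (resp. `s₂ k`) the
integer with `M_i[k] = Σ_{l=k+1}^{s_{i,k}} M_i[l]` (everything written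
`0`-indexed).  Then `{k : s₁ k ≠ s₂ k}` is nonempty, so the compatibility
`Comp(M₁,M₂) = min { min (s₁ k) (s₂ k) : s₁ k ≠ s₂ k }` is well defined, and
it is a positive integer. -/
theorem stmt16 (m₁ m₂ : ℕ → ℕ) (k₁ k₂ : ℕ)
    (h₁ : IsMultiplicitySequence m₁ k₁) (h₂ : IsMultiplicitySequence m₂ k₂)
    (hne : m₁ ≠ m₂) (s₁ s₂ : ℕ → ℕ)
    (hs₁ : ∀ k, k < s₁ k ∧ m₁ k = ∑ l ∈ Finset.Ioc k (s₁ k), m₁ l)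
    (hs₂ : ∀ k, k < s₂ k ∧ m₂ k = ∑ l ∈ Finset.Ioc k (s₂ k), m₂ l) :
    {k : ℕ | s₁ k ≠ s₂ k}.Nonempty ∧
    ∃ C : ℕ, IsLeast {v : ℕ | ∃ k, s₁ k ≠ s₂ k ∧ v = min (s₁ k) (s₂ k)} C ∧
      0 < C := by
  have hnonempty : {k : ℕ | s₁ k ≠ s₂ k}.Nonempty := by
    by_contra h
    rw [Set.not_nonempty_iff_eq_empty, Set.eq_empty_iff_forall_notMem] at h
    simp only [Set.mem_setOf_eq, not_not] at h
    apply hne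
    set K := max k₁ k₂ with hK
    have key : ∀ d k, K ≤ k + d → m₁ k = m₂ k := by
      intro d
      induction d with
      | zero =>
        intro k hk
        rw [h₁.2.2.1 k (by omega), h₂.2.2.1 k (by omega)]
      | succ d ih =>
        intro k hk
        by_cases hk' : K ≤ k
        · rw [h₁.2.2.1 k (by omega), h₂.2.2.1 k (by omega)]
        · rw [(hs₁ k).2, (hs₂ k).2, ← h k]
          apply Finset.sum_congr rfl
          intro l hl
          have hkl : k < l := (Finset.mem_Ioc.mp hl).1
          exact ih l (by omega)
    funext k
    exact key K k (by omega)
  refine ⟨hnonempty, ?_⟩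
  obtain ⟨k, hk⟩ := hnonempty
  have hS : {v : ℕ | ∃ k, s₁ k ≠ s₂ k ∧ v = min (s₁ k) (s₂ k)}.Nonempty :=
    ⟨min (s₁ k) (s₂ k), k, hk, rfl⟩
  refine ⟨sInf _, ⟨Nat.sInf_mem hS, fun v hv => Nat.sInf_le hv⟩, ?_⟩
  obtain ⟨j, _, hj⟩ := Nat.sInf_mem hS
  have := (hs₁ j).1
  have := (hs₂ j).1
  omega
end
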